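/- arXiv:2106.06552 — 2 statements merged into one kernel-verified Lean document; each statement's English description precedes it below -/
import Mathlib

section
/- For every pair of functions e₁ : {-1,1}² → [-1,1] (depending on (x₁,x₃)), e₂ : {-1,1}² → [-1,1] (depending on (x₁,x₂)), e₃ : {-1,1}² → [-1,1] (depending on (x₂,x₃)), the fidelity (1/8) Σ_{x₁,x₂,x₃ ∈ {-1,1}} Q_G(x₁,x₂,x₃) e₁(x₁,x₃) e₂(x₁,x₂) e₃(x₂,x₃) is at most 3/4, where Q_G(x) = 1 - (1-x₁)(1-x₂)(1-x₃)/4. -/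
/-!
Grouping the eight terms in pairs that differ only in `x₁`, each pair is
`(u + v) * e₃ x₂ x₃` with `u = QG (-1) x₂ x₃ * e₁ (-1) x₃ * e₂ (-1) x₂` and
`v = e₁ 1 x₃ * e₂ 1 x₂`, all three factors in `[-1, 1]`; since `|u + v| ≤ 1 + u v` on
`[-1, 1]²`, the pair is at most `1 + u v`.
The products `u v = QG (-1) x₂ x₃ * A x₃ * B x₂`, with `A x₃ = e₁ (-1) x₃ * e₁ 1 x₃` and
`B x₂ = e₂ (-1) x₂ * e₂ 1 x₂` in `[-1, 1]`, sum to a CHSH expression, which is at most 2,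
so the four pairs contribute at most `4 + 2 = 6`.
-/

noncomputable def QG (x₁ x₂ x₃ : ℝ) : ℝ := 1 - (1 - x₁) * (1 - x₂) * (1 - x₃) / 4

section OrderedRing

variable {α : Type*} [CommRing α] [LinearOrder α] [IsStrictOrderedRing α]

theorem abs_mul_le_one_of_abs_le_one {a b : α} (ha : |a| ≤ 1) (hb : |b| ≤ 1) :
    |a * b| ≤ 1 := by
  rw [abs_mul]
  exact mul_le_one₀ ha (abs_nonneg b) hb

theorem mul_le_abs_of_abs_le_one (a : α) {c : α} (hc : |c| ≤ 1) : a * c ≤ |a| :=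
  calc a * c ≤ |a * c| := le_abs_self _
    _ = |a| * |c| := abs_mul a c
    _ ≤ |a| := mul_le_of_le_one_right (abs_nonneg a) hc

theorem abs_add_le_one_add_mul {u v : α} (hu : |u| ≤ 1) (hv : |v| ≤ 1) :
    |u + v| ≤ 1 + u * v := by
  rw [abs_le] at hu hv
  rw [abs_le]
  constructor <;> nlinarith

theorem add_mul_le_one_add_mul {u v c : α} (hu : |u| ≤ 1) (hv : |v| ≤ 1) (hc : |c| ≤ 1) :
    u * c + v * c ≤ 1 + u * v :=
  calc u * c + v * c = (u + v) * c := (add_mul u v c).symm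
    _ ≤ |u + v| := mul_le_abs_of_abs_le_one _ hc
    _ ≤ 1 + u * v := abs_add_le_one_add_mul hu hv

theorem chsh_le_two {a₁ a₂ b₁ b₂ : α} (ha₁ : |a₁| ≤ 1) (ha₂ : |a₂| ≤ 1) (hb₁ : |b₁| ≤ 1)
    (hb₂ : |b₂| ≤ 1) : -(a₁ * b₁) + a₁ * b₂ + a₂ * b₁ + a₂ * b₂ ≤ 2 :=
  calc -(a₁ * b₁) + a₁ * b₂ + a₂ * b₁ + a₂ * b₂ = (b₂ + -b₁) * a₁ + (b₁ + b₂) * a₂ := by ring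
    _ ≤ |b₂ + -b₁| + |b₁ + b₂| :=
      add_le_add (mul_le_abs_of_abs_le_one _ ha₁) (mul_le_abs_of_abs_le_one _ ha₂)
    _ ≤ (1 + b₂ * -b₁) + (1 + b₁ * b₂) :=
      add_le_add (abs_add_le_one_add_mul hb₂ (by rwa [abs_neg])) (abs_add_le_one_add_mul hb₁ hb₂)
    _ = 2 := by ring

end OrderedRing

theorem QG_one (x₂ x₃ : ℝ) : QG 1 x₂ x₃ = 1 := by
  simp [QG]

theorem abs_QG_neg_one_le_one {x₂ x₃ : ℝ} (hx₂ : x₂ ∈ ({-1, 1} : Finset ℝ))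
    (hx₃ : x₃ ∈ ({-1, 1} : Finset ℝ)) : |QG (-1) x₂ x₃| ≤ 1 := by
  simp only [Finset.mem_insert, Finset.mem_singleton] at hx₂ hx₃
  rcases hx₂ with rfl | rfl <;> rcases hx₃ with rfl | rfl <;> norm_num [QG]

theorem stmt_16 (e₁ e₂ e₃ : ℝ → ℝ → ℝ)
    (h₁ : ∀ u ∈ ({-1, 1} : Finset ℝ), ∀ v ∈ ({-1, 1} : Finset ℝ), |e₁ u v| ≤ 1)
    (h₂ : ∀ u ∈ ({-1, 1} : Finset ℝ), ∀ v ∈ ({-1, 1} : Finset ℝ), |e₂ u v| ≤ 1)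
    (h₃ : ∀ u ∈ ({-1, 1} : Finset ℝ), ∀ v ∈ ({-1, 1} : Finset ℝ), |e₃ u v| ≤ 1) :
    (1 / 8 : ℝ) * ∑ x₁ ∈ ({-1, 1} : Finset ℝ), ∑ x₂ ∈ ({-1, 1} : Finset ℝ),
        ∑ x₃ ∈ ({-1, 1} : Finset ℝ),
          QG x₁ x₂ x₃ * e₁ x₁ x₃ * e₂ x₁ x₂ * e₃ x₂ x₃ ≤ 3 / 4 := by
  have hm : (-1 : ℝ) ∈ ({-1, 1} : Finset ℝ) := by simp
  have hp : (1 : ℝ) ∈ ({-1, 1} : Finset ℝ) := by simp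
  have hne : (-1 : ℝ) ≠ 1 := by norm_num
  set A : ℝ → ℝ := fun x₃ ↦ e₁ (-1) x₃ * e₁ 1 x₃
  set B : ℝ → ℝ := fun x₂ ↦ e₂ (-1) x₂ * e₂ 1 x₂
  have pair_le : ∀ x₂ ∈ ({-1, 1} : Finset ℝ), ∀ x₃ ∈ ({-1, 1} : Finset ℝ),
      ∑ x₁ ∈ ({-1, 1} : Finset ℝ), QG x₁ x₂ x₃ * e₁ x₁ x₃ * e₂ x₁ x₂ * e₃ x₂ x₃
        ≤ 1 + QG (-1) x₂ x₃ * A x₃ * B x₂ := by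
    intro x₂ hx₂ x₃ hx₃
    have := add_mul_le_one_add_mul
      (abs_mul_le_one_of_abs_le_one (abs_mul_le_one_of_abs_le_one
        (abs_QG_neg_one_le_one hx₂ hx₃) (h₁ _ hm _ hx₃)) (h₂ _ hm _ hx₂))
      (abs_mul_le_one_of_abs_le_one (h₁ _ hp _ hx₃) (h₂ _ hp _ hx₂)) (h₃ _ hx₂ _ hx₃)
    rw [Finset.sum_pair hne, QG_one]
    linarith
  have chsh := chsh_le_two
    (abs_mul_le_one_of_abs_le_one (h₁ _ hm _ hm) (h₁ _ hp _ hm))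
    (abs_mul_le_one_of_abs_le_one (h₁ _ hm _ hp) (h₁ _ hp _ hp))
    (abs_mul_le_one_of_abs_le_one (h₂ _ hm _ hm) (h₂ _ hp _ hm))
    (abs_mul_le_one_of_abs_le_one (h₂ _ hm _ hp) (h₂ _ hp _ hp))
  calc (1 / 8 : ℝ) * ∑ x₁ ∈ ({-1, 1} : Finset ℝ), ∑ x₂ ∈ ({-1, 1} : Finset ℝ),
        ∑ x₃ ∈ ({-1, 1} : Finset ℝ), QG x₁ x₂ x₃ * e₁ x₁ x₃ * e₂ x₁ x₂ * e₃ x₂ x₃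
      = (1 / 8 : ℝ) * ∑ x₂ ∈ ({-1, 1} : Finset ℝ), ∑ x₃ ∈ ({-1, 1} : Finset ℝ),
          ∑ x₁ ∈ ({-1, 1} : Finset ℝ), QG x₁ x₂ x₃ * e₁ x₁ x₃ * e₂ x₁ x₂ * e₃ x₂ x₃ := by
        rw [Finset.sum_comm]
        exact congrArg _ (Finset.sum_congr rfl fun _ _ ↦ Finset.sum_comm)
    _ ≤ (1 / 8 : ℝ) * ∑ x₂ ∈ ({-1, 1} : Finset ℝ), ∑ x₃ ∈ ({-1, 1} : Finset ℝ),
          (1 + QG (-1) x₂ x₃ * A x₃ * B x₂) := by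
        gcongr with x₂ hx₂ x₃ hx₃
        exact pair_le x₂ hx₂ x₃ hx₃
    _ ≤ 3 / 4 := by
        simp only [Finset.sum_pair hne]
        norm_num [QG]
        linarith
end

section
/- The maximum over all functions a, b, c : {-1,1}² → {-1,1} of Σ_{x₁,x₂,x₃ ∈ {-1,1}} Q_G(x₁,x₂,x₃) a(x₁,x₃) b(x₁,x₂) c(x₂,x₃), with Q_G(x) = 1 - (1-x₁)(1-x₂)(1-x₃)/4, equals 6; in particular it is strictly less than 8 = Σₓ |Q_G(x)|. -/
notation "pm" => ({-1, 1} : Finset ℝ)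

open Finset

lemma sum_le_card_sub_two_of_prod_eq_neg_one {ι : Type*} {s : Finset ι} {f : ι → ℝ}
    (hf : ∀ i ∈ s, f i * f i = 1) (hprod : ∏ i ∈ s, f i = -1) :
    ∑ i ∈ s, f i ≤ #s - 2 := by
  have hsign : ∀ i ∈ s, f i = 1 ∨ f i = -1 := fun i hi => mul_self_eq_one_iff.mp (hf i hi)
  obtain ⟨i, hi, hfi⟩ : ∃ i ∈ s, f i = -1 := by
    by_contra! h
    have : ∏ i ∈ s, f i = 1 := prod_eq_one fun i hi => (hsign i hi).resolve_right (h i hi)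
    norm_num [this] at hprod
  have hdefect : 1 - f i ≤ ∑ j ∈ s, (1 - f j) :=
    single_le_sum (f := fun j => 1 - f j)
      (fun j hj => by rcases hsign j hj with h | h <;> linarith) hi
  rw [sum_sub_distrib, sum_const, nsmul_one, hfi] at hdefect
  linarith

lemma prod_prod_prod_mul_mul {α M : Type*} [CommMonoid M] (s : Finset α) (a b c : α → α → M) :
    ∏ x ∈ s, ∏ y ∈ s, ∏ z ∈ s, a x z * b x y * c y z =
      (∏ x ∈ s, ∏ z ∈ s, a x z) ^ #s * (∏ x ∈ s, ∏ y ∈ s, b x y) ^ #s *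
        (∏ y ∈ s, ∏ z ∈ s, c y z) ^ #s := by
  simp only [prod_mul_distrib, prod_const, prod_pow]

lemma prod_prod_mul_self_eq_one {α R : Type*} [CommMonoid R] {s : Finset α} {f : α → α → R}
    (hf : ∀ u ∈ s, ∀ v ∈ s, f u v * f u v = 1) :
    (∏ u ∈ s, ∏ v ∈ s, f u v) ^ 2 = 1 := by
  rw [sq, ← prod_mul_distrib]
  refine prod_eq_one fun u hu => ?_
  rw [← prod_mul_distrib]
  exact prod_eq_one fun v hv => hf u hu v hv

lemma QG_mul_self_eq_one {x₁ x₂ x₃ : ℝ} (h₁ : x₁ ∈ pm) (h₂ : x₂ ∈ pm) (h₃ : x₃ ∈ pm) :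
    QG x₁ x₂ x₃ * QG x₁ x₂ x₃ = 1 := by
  simp only [mem_insert, mem_singleton] at h₁ h₂ h₃
  rcases h₁ with rfl | rfl <;> rcases h₂ with rfl | rfl <;> rcases h₃ with rfl | rfl <;>
    norm_num [QG]

lemma prod_QG : ∏ x₁ ∈ pm, ∏ x₂ ∈ pm, ∏ x₃ ∈ pm, QG x₁ x₂ x₃ = -1 := by
  norm_num [prod_pair, QG]

lemma sum_QG : ∑ x₁ ∈ pm, ∑ x₂ ∈ pm, ∑ x₃ ∈ pm, QG x₁ x₂ x₃ = 6 := by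
  norm_num [sum_pair, QG]

lemma sum_abs_QG : ∑ x₁ ∈ pm, ∑ x₂ ∈ pm, ∑ x₃ ∈ pm, |QG x₁ x₂ x₃| = 8 := by
  norm_num [sum_pair, QG]

lemma prod_QG_mul_mul_mul {a b c : ℝ → ℝ → ℝ}
    (ha : ∀ u ∈ pm, ∀ v ∈ pm, a u v * a u v = 1) (hb : ∀ u ∈ pm, ∀ v ∈ pm, b u v * b u v = 1)
    (hc : ∀ u ∈ pm, ∀ v ∈ pm, c u v * c u v = 1) :
    ∏ x₁ ∈ pm, ∏ x₂ ∈ pm, ∏ x₃ ∈ pm, QG x₁ x₂ x₃ * a x₁ x₃ * b x₁ x₂ * c x₂ x₃ = -1 := by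
  have hsplit : ∏ x₁ ∈ pm, ∏ x₂ ∈ pm, ∏ x₃ ∈ pm, QG x₁ x₂ x₃ * a x₁ x₃ * b x₁ x₂ * c x₂ x₃ =
      (∏ x₁ ∈ pm, ∏ x₂ ∈ pm, ∏ x₃ ∈ pm, QG x₁ x₂ x₃) *
        ∏ x₁ ∈ pm, ∏ x₂ ∈ pm, ∏ x₃ ∈ pm, a x₁ x₃ * b x₁ x₂ * c x₂ x₃ := by
    simp only [← prod_mul_distrib, mul_assoc]
  have hcard : #pm = 2 := by norm_num
  rw [hsplit, prod_QG, prod_prod_prod_mul_mul, hcard, prod_prod_mul_self_eq_one ha,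
    prod_prod_mul_self_eq_one hb, prod_prod_mul_self_eq_one hc]
  norm_num

lemma gyni_sum_le_six (a b c : ℝ → ℝ → ℝ)
    (ha : ∀ u ∈ pm, ∀ v ∈ pm, a u v = 1 ∨ a u v = -1)
    (hb : ∀ u ∈ pm, ∀ v ∈ pm, b u v = 1 ∨ b u v = -1)
    (hc : ∀ u ∈ pm, ∀ v ∈ pm, c u v = 1 ∨ c u v = -1) :
    ∑ x₁ ∈ pm, ∑ x₂ ∈ pm, ∑ x₃ ∈ pm, QG x₁ x₂ x₃ * a x₁ x₃ * b x₁ x₂ * c x₂ x₃ ≤ 6 := by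
  replace ha := fun u hu v hv => mul_self_eq_one_iff.mpr (ha u hu v hv)
  replace hb := fun u hu v hv => mul_self_eq_one_iff.mpr (hb u hu v hv)
  replace hc := fun u hu v hv => mul_self_eq_one_iff.mpr (hc u hu v hv)
  set f : ℝ × ℝ × ℝ → ℝ := fun x =>
    QG x.1 x.2.1 x.2.2 * a x.1 x.2.2 * b x.1 x.2.1 * c x.2.1 x.2.2
  have hsum : ∑ x₁ ∈ pm, ∑ x₂ ∈ pm, ∑ x₃ ∈ pm, QG x₁ x₂ x₃ * a x₁ x₃ * b x₁ x₂ * c x₂ x₃ =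
      ∑ x ∈ pm ×ˢ pm ×ˢ pm, f x := by
    simp only [f, sum_product]
  have hsign : ∀ x ∈ pm ×ˢ pm ×ˢ pm, f x * f x = 1 := by
    rintro ⟨x₁, x₂, x₃⟩ hx
    simp only [mem_product] at hx
    obtain ⟨h₁, h₂, h₃⟩ := hx
    calc f (x₁, x₂, x₃) * f (x₁, x₂, x₃)
        = QG x₁ x₂ x₃ * QG x₁ x₂ x₃ * (a x₁ x₃ * a x₁ x₃) * (b x₁ x₂ * b x₁ x₂) *
            (c x₂ x₃ * c x₂ x₃) := by ring
      _ = 1 := by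
        rw [QG_mul_self_eq_one h₁ h₂ h₃, ha _ h₁ _ h₃, hb _ h₁ _ h₂, hc _ h₂ _ h₃]
        norm_num
  have hprod : ∏ x ∈ pm ×ˢ pm ×ˢ pm, f x = -1 := by
    simpa only [f, prod_product] using prod_QG_mul_mul_mul ha hb hc
  have hcard : (#(pm ×ˢ pm ×ˢ pm) : ℝ) = 8 := by norm_num
  rw [hsum]
  linarith [sum_le_card_sub_two_of_prod_eq_neg_one hsign hprod]

theorem stmt_17 :
    (∀ a b c : ℝ → ℝ → ℝ,
      (∀ u ∈ pm, ∀ v ∈ pm, a u v = 1 ∨ a u v = -1) →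
      (∀ u ∈ pm, ∀ v ∈ pm, b u v = 1 ∨ b u v = -1) →
      (∀ u ∈ pm, ∀ v ∈ pm, c u v = 1 ∨ c u v = -1) →
      ∑ x₁ ∈ pm, ∑ x₂ ∈ pm, ∑ x₃ ∈ pm,
        QG x₁ x₂ x₃ * a x₁ x₃ * b x₁ x₂ * c x₂ x₃ ≤ 6) ∧
    (∃ a b c : ℝ → ℝ → ℝ,
      (∀ u ∈ pm, ∀ v ∈ pm, a u v = 1 ∨ a u v = -1) ∧
      (∀ u ∈ pm, ∀ v ∈ pm, b u v = 1 ∨ b u v = -1) ∧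
      (∀ u ∈ pm, ∀ v ∈ pm, c u v = 1 ∨ c u v = -1) ∧
      ∑ x₁ ∈ pm, ∑ x₂ ∈ pm, ∑ x₃ ∈ pm,
        QG x₁ x₂ x₃ * a x₁ x₃ * b x₁ x₂ * c x₂ x₃ = 6) ∧
    (6 : ℝ) < ∑ x₁ ∈ pm, ∑ x₂ ∈ pm, ∑ x₃ ∈ pm, |QG x₁ x₂ x₃| := by
  have one_sign : ∀ u ∈ pm, ∀ v ∈ pm, (1 : ℝ) = 1 ∨ (1 : ℝ) = -1 := fun _ _ _ _ => Or.inl rfl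
  refine ⟨gyni_sum_le_six,
    ⟨fun _ _ => 1, fun _ _ => 1, fun _ _ => 1, one_sign, one_sign, one_sign, ?_⟩, ?_⟩
  · simpa only [mul_one] using sum_QG
  · rw [sum_abs_QG]
    norm_num
end
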